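/- Let d ≥ 4 be even. There exist constants c₁, C₁, c₂, C₂ > 0 independent of q such that for every power q of an odd prime and every m ≠ (0,…,0) in F_q^d: if Γ(m) = 0 then c₁ q^{−(d−2)/2} ≤ |K(m)| = |σ^∨(m)| ≤ C₁ q^{−(d−2)/2}, and if Γ(m) ≠ 0 then c₂ q^{−d/2} ≤ |K(m)| = |σ^∨(m)| ≤ C₂ q^{−d/2}. Moreover K(0,…,0) = 0. -/

import Mathlib

open Finset MeasureTheory
open scoped ENNReal

namespace ConeFF

variable (F : Type) [Field F] [Fintype F] [DecidableEq F]

/-- The cone `C = {x ∈ F^d : x₁² + ⋯ + x_{d-2}² = x_{d-1} x_d}` (0-indexed). -/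
def cone (d : ℕ) (hd : 3 ≤ d) : Finset (Fin d → F) :=
  Finset.univ.filter fun x =>
    (∑ i ∈ Finset.univ.filter (fun i : Fin d => (i : ℕ) < d - 2), x i ^ 2) =
      x ⟨d - 2, by omega⟩ * x ⟨d - 1, by omega⟩

/-- The quadratic form `Γ(ξ) = ξ₁² + ⋯ + ξ_{d-2}² − 4 ξ_{d-1} ξ_d`. -/
def gammaForm (d : ℕ) (hd : 3 ≤ d) (ξ : Fin d → F) : F :=
  (∑ i ∈ Finset.univ.filter (fun i : Fin d => (i : ℕ) < d - 2), ξ i ^ 2) -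
    4 * ξ ⟨d - 2, by omega⟩ * ξ ⟨d - 1, by omega⟩

/-- Indicator function of a finite set, with values in `ℂ`. -/
def ind {V : Type} [DecidableEq V] (E : Finset V) : V → ℂ :=
  fun x => if x ∈ E then 1 else 0

/-- Convolution with respect to the normalized counting measure `dx`. -/
noncomputable def conv (d : ℕ) (f g : (Fin d → F) → ℂ) : (Fin d → F) → ℂ :=
  fun y => ((Fintype.card F : ℂ) ^ d)⁻¹ * ∑ x, f (y - x) * g x

/-- The averaging operator `f ∗ σ` over the cone. -/
noncomputable def avg (d : ℕ) (hd : 3 ≤ d) (f : (Fin d → F) → ℂ) : (Fin d → F) → ℂ :=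
  fun y => ((cone F d hd).card : ℂ)⁻¹ * ∑ x ∈ cone F d hd, f (y - x)

/-- Inverse Fourier transform `f^∨(m) = q^{-d} ∑_x χ(m·x) f(x)`. -/
noncomputable def invFT (d : ℕ) (χ : AddChar F ℂ) (f : (Fin d → F) → ℂ)
    (m : Fin d → F) : ℂ :=
  ((Fintype.card F : ℂ) ^ d)⁻¹ * ∑ x, χ (dotProduct m x) * f x

/-- Fourier transform `ĝ(x) = ∑_m χ(−m·x) g(m)` on the dual space. -/
noncomputable def ft (d : ℕ) (χ : AddChar F ℂ) (g : (Fin d → F) → ℂ)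
    (x : Fin d → F) : ℂ :=
  ∑ m, χ (-(dotProduct m x)) * g m

/-- `σ^∨(m) = |C|⁻¹ ∑_{x∈C} χ(m·x)`. -/
noncomputable def sigmaInv (d : ℕ) (hd : 3 ≤ d) (χ : AddChar F ℂ) (m : Fin d → F) : ℂ :=
  ((cone F d hd).card : ℂ)⁻¹ * ∑ x ∈ cone F d hd, χ (dotProduct m x)

/-- `K(m) = σ^∨(m) − δ₀(m)`. -/
noncomputable def Kfun (d : ℕ) (hd : 3 ≤ d) (χ : AddChar F ℂ) (m : Fin d → F) : ℂ :=
  sigmaInv F d hd χ m - if m = 0 then 1 else 0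

/-- `M(m) = C^∨(m) − (|C|/q^d) δ₀(m)`. -/
noncomputable def Mfun (d : ℕ) (hd : 3 ≤ d) (χ : AddChar F ℂ) (m : Fin d → F) : ℂ :=
  invFT F d χ (ind (cone F d hd)) m -
    if m = 0 then ((cone F d hd).card : ℂ) / (Fintype.card F : ℂ) ^ d else 0

/-- `L^p(C,σ)` norm (for finite `p`), with `σ` the normalized surface measure. -/
noncomputable def coneLpNorm (d : ℕ) (hd : 3 ≤ d) (p : ℝ) (h : (Fin d → F) → ℂ) : ℝ :=
  (((cone F d hd).card : ℝ)⁻¹ * ∑ x ∈ cone F d hd, ‖h x‖ ^ p) ^ (1 / p)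

/-- `L^p(F_q^d, dx)` norm (for finite `p`), with `dx` the normalized counting measure. -/
noncomputable def spaceLpNorm (d : ℕ) (p : ℝ) (f : (Fin d → F) → ℂ) : ℝ :=
  (((Fintype.card F : ℝ) ^ d)⁻¹ * ∑ x, ‖f x‖ ^ p) ^ (1 / p)

/-!
Write `Q(x) = x₁² + ⋯ + x_{d-2}² − x_{d-1} x_d`, `η` for the quadratic character of `F_q` and
`G` for its Gauss sum. Detecting the cone by orthogonality, `q · 1_C(x) = ∑_s χ(s Q(x))`, turns
`q ∑_{x ∈ C} χ(m·x)` into `∑_s ∑_x χ(s Q(x) + m·x)`. The term `s = 0` is `q^d δ₀(m)`. For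
`s ≠ 0`, writing `x = (y, u, v)` splits the sum into `d - 2` one-variable quadratic sums, each
equal to `η(s) G` times a phase after completing the square, and one sum over the hyperbolic
plane `(u, v)`; altogether it is `q (η(s) G)^{d-2} χ(-Γ(m)/(4s))`. As `d - 2` is even,
`η(s)^{d-2} = 1`, and summing over `s ≠ 0` leaves `q G^{d-2} (q·[Γ(m) = 0] - 1)`. Finally
`G² = η(-1) q` gives `|G^{d-2}| = q^{(d-2)/2}`, so `m = 0` yields `|C| = q^{d-1} + O(q^{d/2})`,
and dividing by `|C|` gives both estimates.
-/
variable {F}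

omit [DecidableEq F] in
lemma three_le_card_of_ringChar_ne_two (hF : ringChar F ≠ 2) : 3 ≤ Fintype.card F := by
  have hodd := FiniteField.odd_card_of_char_ne_two hF
  have htwo : 2 ≤ Fintype.card F := Fintype.one_lt_card
  omega

section

omit [Fintype F] [DecidableEq F]

lemma four_ne_zero_of_ringChar_ne_two (hF : ringChar F ≠ 2) : (4 : F) ≠ 0 := by
  simpa [show (4 : F) = 2 ^ 2 by norm_num] using pow_ne_zero 2 (Ring.two_ne_zero hF)

lemma sum_pi_fin_succ {α M : Type*} [Fintype α] [AddCommMonoid M] {n : ℕ}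
    (f : (Fin (n + 1) → α) → M) :
    ∑ x, f x = ∑ y : Fin n → α, ∑ u, f (Fin.snoc y u) := by
  rw [← (Fin.snocEquiv fun _ => α).sum_comp, Fintype.sum_prod_type, sum_comm]
  rfl

-- The bound `n + 2 - 2` is left unsimplified so that this rewrites the unfolded
-- `coneForm` and `gammaForm` directly.
lemma sum_filter_val_lt {M : Type*} [AddCommMonoid M] {n : ℕ} (g : Fin (n + 2) → M) :
    ∑ i ∈ univ.filter (fun i : Fin (n + 2) => (i : ℕ) < n + 2 - 2), g i =
      ∑ j : Fin n, g j.castSucc.castSucc := by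
  refine sum_bij' (fun i hi => ⟨i, by simpa using hi⟩) (fun j _ => j.castSucc.castSucc)
    (fun _ _ => mem_univ _) (fun j _ => by simp) (fun _ _ => rfl) (fun _ _ => rfl) fun _ _ => rfl

variable (F) in
def coneForm (d : ℕ) (hd : 3 ≤ d) (x : Fin d → F) : F :=
  (∑ i ∈ Finset.univ.filter (fun i : Fin d => (i : ℕ) < d - 2), x i ^ 2) -
    x ⟨d - 2, by omega⟩ * x ⟨d - 1, by omega⟩

variable {n : ℕ}

lemma snoc_snoc_apply_penultimate {α : Type*} (y : Fin n → α) (u v : α) :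
    (Fin.snoc (Fin.snoc y u) v : Fin (n + 2) → α) ⟨n + 2 - 2, by omega⟩ = u := by
  rw [show (⟨n + 2 - 2, by omega⟩ : Fin (n + 2)) = (Fin.last n).castSucc from Fin.ext (by simp)]
  simp

lemma snoc_snoc_apply_last {α : Type*} (y : Fin n → α) (u v : α) :
    (Fin.snoc (Fin.snoc y u) v : Fin (n + 2) → α) ⟨n + 2 - 1, by omega⟩ = v := by
  rw [show (⟨n + 2 - 1, by omega⟩ : Fin (n + 2)) = Fin.last (n + 1) from Fin.ext (by simp)]
  simp

lemma coneForm_snoc_snoc (hd : 3 ≤ n + 2) (y : Fin n → F) (u v : F) :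
    coneForm F (n + 2) hd (Fin.snoc (Fin.snoc y u) v) = ∑ j, y j ^ 2 - u * v := by
  rw [coneForm, sum_filter_val_lt, snoc_snoc_apply_penultimate, snoc_snoc_apply_last]
  simp

lemma gammaForm_snoc_snoc (hd : 3 ≤ n + 2) (b : Fin n → F) (α β : F) :
    gammaForm F (n + 2) hd (Fin.snoc (Fin.snoc b α) β) = ∑ j, b j ^ 2 - 4 * α * β := by
  rw [gammaForm, sum_filter_val_lt, snoc_snoc_apply_penultimate, snoc_snoc_apply_last]
  simp

lemma gammaForm_zero (d : ℕ) (hd : 3 ≤ d) : gammaForm F d hd 0 = 0 := by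
  simp [gammaForm]

lemma dotProduct_snoc_snoc (b y : Fin n → F) (α β u v : F) :
    dotProduct (Fin.snoc (Fin.snoc b α) β : Fin (n + 2) → F) (Fin.snoc (Fin.snoc y u) v) =
      dotProduct b y + (α * u + β * v) := by
  simp [dotProduct, Fin.sum_univ_castSucc, add_assoc]

end

section CharacterSums

variable {χ : AddChar F ℂ}

lemma _root_.AddChar.map_sum_eq_prod {A M ι : Type*} [AddCommMonoid A] [CommMonoid M]
    (ψ : AddChar A M) (s : Finset ι) (f : ι → A) : ψ (∑ i ∈ s, f i) = ∏ i ∈ s, ψ (f i) := by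
  classical
  induction s using Finset.induction_on with
  | empty => simp
  | insert a s ha ih => rw [sum_insert ha, prod_insert ha, AddChar.map_add_eq_mul, ih]

lemma sum_addChar_mul (hχ : χ.IsPrimitive) (c : F) :
    ∑ s : F, χ (s * c) = if c = 0 then (Fintype.card F : ℂ) else 0 := by
  rw [AddChar.sum_mulShift c hχ, Nat.cast_ite, Nat.cast_zero]

lemma sum_addChar_dotProduct (hχ : χ.IsPrimitive) {ι : Type*} [Fintype ι] [DecidableEq ι]
    (m : ι → F) :
    ∑ x : ι → F, χ (dotProduct m x) =
      if m = 0 then (Fintype.card F : ℂ) ^ Fintype.card ι else 0 := by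
  simp_rw [dotProduct_comm m, dotProduct, AddChar.map_sum_eq_prod]
  rw [← Fintype.prod_sum fun i (t : F) => χ (t * m i)]
  simp_rw [sum_addChar_mul hχ, Fintype.prod_ite_zero, prod_const, card_univ, funext_iff,
    Pi.zero_apply]

lemma sum_addChar_mul_inv (hχ : χ.IsPrimitive) (c : F) {a : F} (ha : a ≠ 0) :
    ∑ s : F, χ (c / (a * s)) = if c = 0 then (Fintype.card F : ℂ) else 0 := by
  simp_rw [div_eq_inv_mul]
  rw [← sum_addChar_mul hχ c]
  exact Fintype.sum_equiv ((Equiv.mulLeft₀ a ha).trans (Equiv.inv F)) _ _ fun _ => rfl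

variable (F) in
noncomputable def complexQuadraticChar : MulChar F ℂ :=
  (quadraticChar F).ringHomComp (Int.castRingHom ℂ)

lemma complexQuadraticChar_apply (a : F) :
    complexQuadraticChar F a = (quadraticChar F a : ℂ) := rfl

lemma complexQuadraticChar_isQuadratic : (complexQuadraticChar F).IsQuadratic :=
  (quadraticChar_isQuadratic F).comp _

lemma complexQuadraticChar_ne_one (hF : ringChar F ≠ 2) : complexQuadraticChar F ≠ 1 :=
  (MulChar.ringHomComp_ne_one_iff (Int.cast_injective)).mpr (quadraticChar_ne_one hF)

lemma card_sqrts_eq (hF : ringChar F ≠ 2) (u : F) :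
    (#{t : F | t ^ 2 = u} : ℂ) = complexQuadraticChar F u + 1 := by
  have h := quadraticChar_card_sqrts hF u
  rw [Set.toFinset_ofPred] at h
  rw [complexQuadraticChar_apply]
  exact_mod_cast h

lemma sum_addChar_sq_mul (hF : ringChar F ≠ 2) (hχ : χ.IsPrimitive) {s : F} (hs : s ≠ 0) :
    ∑ t : F, χ (t ^ 2 * s) = complexQuadraticChar F s * gaussSum (complexQuadraticChar F) χ := by
  have hfiber : ∑ t : F, χ (t ^ 2 * s) = ∑ u : F, (#{t : F | t ^ 2 = u} : ℂ) * χ (u * s) := by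
    rw [← sum_fiberwise' univ (· ^ 2) fun u => χ (u * s)]
    simp_rw [sum_const, nsmul_eq_mul]
  have hshift := gaussSum_mulShift_eq (complexQuadraticChar F) χ (Units.mk0 s hs)
  rw [complexQuadraticChar_isQuadratic.inv, Units.val_mk0] at hshift
  simp_rw [hfiber, card_sqrts_eq hF, add_mul, one_mul, sum_add_distrib, sum_addChar_mul hχ,
    if_neg hs, add_zero, ← hshift, gaussSum, AddChar.mulShift_apply, mul_comm s]

lemma sum_addChar_sq_mul_add_mul (hF : ringChar F ≠ 2) (hχ : χ.IsPrimitive) {s : F} (hs : s ≠ 0)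
    (b : F) :
    ∑ t : F, χ (t ^ 2 * s + b * t) =
      χ (-(b ^ 2) / (4 * s)) * complexQuadraticChar F s * gaussSum (complexQuadraticChar F) χ := by
  have h2 : (2 : F) ≠ 0 := Ring.two_ne_zero hF
  have h4 : (4 : F) ≠ 0 := four_ne_zero_of_ringChar_ne_two hF
  have hsquare : ∀ t : F, t ^ 2 * s + b * t = -(b ^ 2) / (4 * s) + (t + b * (2 * s)⁻¹) ^ 2 * s := by
    intro t
    field_simp
    ring
  simp_rw [hsquare, AddChar.map_add_eq_mul, ← mul_sum, mul_assoc, ← sum_addChar_sq_mul hF hχ hs]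
  congr 1
  exact Fintype.sum_equiv (Equiv.addRight (b * (2 * s)⁻¹)) _ _ fun _ => rfl

lemma sum_addChar_hyperbolic (hχ : χ.IsPrimitive) {s : F} (hs : s ≠ 0) (a b : F) :
    ∑ u : F, ∑ v : F, χ (-(s * u * v) + (a * u + b * v)) =
      (Fintype.card F : ℂ) * χ (a * b * s⁻¹) := by
  have hlin : ∀ u v : F, -(s * u * v) + (a * u + b * v) = a * u + v * (b - s * u) := by
    intro u v; ring
  have hroot : ∀ u : F, b - s * u = 0 ↔ u = s⁻¹ * b := fun u => by
    rw [sub_eq_zero, eq_comm, eq_inv_mul_iff_mul_eq₀ hs]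
  simp_rw [hlin, AddChar.map_add_eq_mul, ← mul_sum, sum_addChar_mul hχ, hroot, mul_ite, mul_zero,
    sum_ite_eq', mem_univ, if_true, mul_comm (χ _)]
  ring_nf

lemma complexQuadraticChar_pow_of_even {s : F} (hs : s ≠ 0) {n : ℕ} (hn : Even n) :
    complexQuadraticChar F s ^ n = 1 := by
  obtain ⟨k, rfl⟩ := hn.two_dvd
  rw [pow_mul, ← map_pow, complexQuadraticChar_apply, quadraticChar_sq_one' hs, Int.cast_one,
    one_pow]

lemma sum_prod_addChar_sq_mul_add_mul (hF : ringChar F ≠ 2) (hχ : χ.IsPrimitive) {s : F}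
    (hs : s ≠ 0) {ι : Type*} [Fintype ι] [DecidableEq ι] (b : ι → F) :
    ∑ y : ι → F, ∏ j, χ (y j ^ 2 * s + b j * y j) =
      χ (-(∑ j, b j ^ 2) / (4 * s)) *
        (complexQuadraticChar F s * gaussSum (complexQuadraticChar F) χ) ^ Fintype.card ι := by
  rw [← Fintype.prod_sum fun j (t : F) => χ (t ^ 2 * s + b j * t)]
  simp_rw [sum_addChar_sq_mul_add_mul hF hχ hs, mul_assoc, prod_mul_distrib, prod_const, card_univ,
    ← AddChar.map_sum_eq_prod, ← sum_div, sum_neg_distrib, mul_pow]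

end CharacterSums

section ConeSum

variable {χ : AddChar F ℂ} {n : ℕ}

lemma cone_eq_filter (d : ℕ) (hd : 3 ≤ d) :
    cone F d hd = univ.filter fun x => coneForm F d hd x = 0 := by
  simp only [cone, coneForm, sub_eq_zero]

lemma card_mul_sum_filter_eq_zero (hχ : χ.IsPrimitive) {α : Type*} [Fintype α] (g : α → F)
    (f : α → ℂ) :
    (Fintype.card F : ℂ) * ∑ x ∈ univ.filter (fun x => g x = 0), f x =
      ∑ s : F, ∑ x, χ (s * g x) * f x := by
  rw [sum_comm]
  simp_rw [← sum_mul, sum_addChar_mul hχ, ite_mul, zero_mul, ← sum_filter, mul_sum]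

lemma sum_addChar_coneForm_add_dotProduct (hF : ringChar F ≠ 2) (hχ : χ.IsPrimitive)
    (hd : 3 ≤ n + 2) {s : F} (hs : s ≠ 0) (m : Fin (n + 2) → F) :
    ∑ x, χ (s * coneForm F (n + 2) hd x + dotProduct m x) =
      (Fintype.card F : ℂ) * χ (-gammaForm F (n + 2) hd m / (4 * s)) *
        (complexQuadraticChar F s * gaussSum (complexQuadraticChar F) χ) ^ n := by
  obtain ⟨b, α, β, rfl⟩ : ∃ b α β, m = Fin.snoc (Fin.snoc b α) β :=
    ⟨_, _, _, by rw [Fin.snoc_init_self, Fin.snoc_init_self]⟩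
  have hsplit : ∀ y u v, χ (s * coneForm F (n + 2) hd (Fin.snoc (Fin.snoc y u) v) +
      dotProduct (Fin.snoc (Fin.snoc b α) β : Fin (n + 2) → F) (Fin.snoc (Fin.snoc y u) v)) =
      (∏ j, χ (y j ^ 2 * s + b j * y j)) * χ (-(s * u * v) + (α * u + β * v)) := by
    intro y u v
    rw [← AddChar.map_sum_eq_prod, ← AddChar.map_add_eq_mul, coneForm_snoc_snoc,
      dotProduct_snoc_snoc, dotProduct, sum_add_distrib, ← sum_mul]
    ring_nf
  rw [sum_pi_fin_succ, sum_pi_fin_succ]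
  simp_rw [hsplit, ← mul_sum, ← sum_mul]
  rw [sum_prod_addChar_sq_mul_add_mul hF hχ hs, sum_addChar_hyperbolic hχ hs, Fintype.card_fin,
    gammaForm_snoc_snoc]
  have hexp : -(∑ j, b j ^ 2 - 4 * α * β) / (4 * s) = -(∑ j, b j ^ 2) / (4 * s) + α * β * s⁻¹ := by
    field_simp [four_ne_zero_of_ringChar_ne_two hF]
    ring
  rw [hexp, AddChar.map_add_eq_mul]
  ring

lemma sum_cone_addChar_dotProduct (hF : ringChar F ≠ 2) (hχ : χ.IsPrimitive) (hn : Even n)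
    (hd : 3 ≤ n + 2) (m : Fin (n + 2) → F) :
    ∑ x ∈ cone F (n + 2) hd, χ (dotProduct m x) =
      (if m = 0 then (Fintype.card F : ℂ) ^ (n + 1) else 0) +
        gaussSum (complexQuadraticChar F) χ ^ n *
          ((if gammaForm F (n + 2) hd m = 0 then (Fintype.card F : ℂ) else 0) - 1) := by
  have hq : (Fintype.card F : ℂ) ≠ 0 := Nat.cast_ne_zero.mpr Fintype.card_ne_zero
  have hzero : ∑ x, χ (0 * coneForm F (n + 2) hd x + dotProduct m x) =
      if m = 0 then (Fintype.card F : ℂ) ^ (n + 2) else 0 := by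
    simp_rw [zero_mul, zero_add, sum_addChar_dotProduct hχ, Fintype.card_fin]
  have hnonzero : ∑ s ∈ univ.erase 0, ∑ x, χ (s * coneForm F (n + 2) hd x + dotProduct m x) =
      (Fintype.card F : ℂ) * gaussSum (complexQuadraticChar F) χ ^ n *
        ((if gammaForm F (n + 2) hd m = 0 then (Fintype.card F : ℂ) else 0) - 1) := by
    rw [sum_congr rfl fun s hs => by
      rw [sum_addChar_coneForm_add_dotProduct hF hχ hd (ne_of_mem_erase hs), mul_pow,
        complexQuadraticChar_pow_of_even (ne_of_mem_erase hs) hn, one_mul]]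
    rw [← sum_mul, ← mul_sum, sum_erase_eq_sub (mem_univ _),
      sum_addChar_mul_inv hχ _ (four_ne_zero_of_ringChar_ne_two hF), mul_zero, div_zero,
      AddChar.map_zero_eq_one]
    simp only [neg_eq_zero]
    ring
  apply mul_left_cancel₀ hq
  simp_rw [cone_eq_filter, card_mul_sum_filter_eq_zero hχ, ← AddChar.map_add_eq_mul]
  rw [← add_sum_erase _ _ (mem_univ 0), hzero, hnonzero]
  split_ifs <;> ring

end ConeSum

section Bounds

variable {χ : AddChar F ℂ} {e : ℕ}

lemma norm_natCast_sub_one {k : ℕ} (hk : 1 ≤ k) : ‖(k : ℂ) - 1‖ = k - 1 := by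
  rw [← Nat.cast_one, ← Nat.cast_sub hk, Complex.norm_natCast, Nat.cast_sub hk, Nat.cast_one]

lemma norm_gaussSum_complexQuadraticChar_sq (hF : ringChar F ≠ 2) (hχ : χ.IsPrimitive) :
    ‖gaussSum (complexQuadraticChar F) χ‖ ^ 2 = Fintype.card F := by
  have hsign : ‖complexQuadraticChar F (-1)‖ = 1 := by
    have h := complexQuadraticChar_pow_of_even (neg_ne_zero.mpr (one_ne_zero (α := F))) even_two
    rw [← pow_eq_one_iff_of_nonneg (norm_nonneg _) two_ne_zero, ← norm_pow, h, norm_one]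
  rw [← norm_pow, gaussSum_sq (complexQuadraticChar_ne_one hF) complexQuadraticChar_isQuadratic hχ,
    norm_mul, hsign, one_mul, Complex.norm_natCast]

lemma abs_card_cone_sub_pow (hF : ringChar F ≠ 2) (hχ : χ.IsPrimitive) (hd : 3 ≤ 2 * e + 2) :
    |((cone F (2 * e + 2) hd).card : ℝ) - (Fintype.card F : ℝ) ^ (2 * e + 1)| =
      (Fintype.card F : ℝ) ^ e * ((Fintype.card F : ℝ) - 1) := by
  have hsum := sum_cone_addChar_dotProduct hF hχ (even_two_mul e) hd 0
  simp only [zero_dotProduct, AddChar.map_zero_eq_one, sum_const, nsmul_eq_mul, mul_one, if_true,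
    gammaForm_zero] at hsum
  calc |((cone F (2 * e + 2) hd).card : ℝ) - (Fintype.card F : ℝ) ^ (2 * e + 1)|
      = ‖gaussSum (complexQuadraticChar F) χ ^ (2 * e) * ((Fintype.card F : ℂ) - 1)‖ := by
        rw [← Real.norm_eq_abs, ← Complex.norm_real]
        push_cast
        rw [hsum]
        ring_nf
    _ = (Fintype.card F : ℝ) ^ e * ((Fintype.card F : ℝ) - 1) := by
        rw [norm_mul, norm_pow, pow_mul, norm_gaussSum_complexQuadraticChar_sq hF hχ,
          norm_natCast_sub_one Fintype.card_pos]

lemma card_cone_bounds (hF : ringChar F ≠ 2) (hχ : χ.IsPrimitive) (he : 1 ≤ e)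
    (hd : 3 ≤ 2 * e + 2) :
    2 / 3 * (Fintype.card F : ℝ) ^ (2 * e + 1) ≤ (cone F (2 * e + 2) hd).card ∧
      ((cone F (2 * e + 2) hd).card : ℝ) ≤ 4 / 3 * (Fintype.card F : ℝ) ^ (2 * e + 1) := by
  have habs := abs_le.mp (abs_card_cone_sub_pow hF hχ hd).le
  have hq : (3 : ℝ) ≤ Fintype.card F := by exact_mod_cast three_le_card_of_ringChar_ne_two hF
  set q := (Fintype.card F : ℝ)
  have hqe : q ≤ q ^ e := le_self_pow₀ (by linarith) (by omega)
  have hsmall : q ^ e * (q - 1) ≤ q ^ (2 * e + 1) / 3 := by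
    rw [show q ^ (2 * e + 1) = q ^ e * (q ^ e * q) by ring]
    nlinarith [mul_nonneg (sub_nonneg.mpr (hq.trans hqe)) (by positivity : 0 ≤ q ^ e * q)]
  constructor <;> linarith [habs.1, habs.2]

lemma norm_sigmaInv_eq (hF : ringChar F ≠ 2) (hχ : χ.IsPrimitive) (hd : 3 ≤ 2 * e + 2)
    {m : Fin (2 * e + 2) → F} (hm : m ≠ 0) :
    ‖sigmaInv F (2 * e + 2) hd χ m‖ =
      (Fintype.card F : ℝ) ^ e *
          (if gammaForm F (2 * e + 2) hd m = 0 then (Fintype.card F : ℝ) - 1 else 1) /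
        (cone F (2 * e + 2) hd).card := by
  rw [sigmaInv, sum_cone_addChar_dotProduct hF hχ (even_two_mul e) hd, if_neg hm, zero_add,
    norm_mul, norm_inv, Complex.norm_natCast, norm_mul, norm_pow, pow_mul,
    norm_gaussSum_complexQuadraticChar_sq hF hχ, div_eq_inv_mul]
  split_ifs
  · rw [norm_natCast_sub_one Fintype.card_pos]
  · simp

lemma norm_sigmaInv_bounds_of_gammaForm_eq_zero (hF : ringChar F ≠ 2) (hχ : χ.IsPrimitive)
    (he : 1 ≤ e) (hd : 3 ≤ 2 * e + 2) {m : Fin (2 * e + 2) → F} (hm : m ≠ 0)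
    (hΓ : gammaForm F (2 * e + 2) hd m = 0) :
    1 / 2 * ((Fintype.card F : ℝ) ^ e)⁻¹ ≤ ‖sigmaInv F (2 * e + 2) hd χ m‖ ∧
      ‖sigmaInv F (2 * e + 2) hd χ m‖ ≤ 3 / 2 * ((Fintype.card F : ℝ) ^ e)⁻¹ := by
  have hq : (3 : ℝ) ≤ Fintype.card F := by exact_mod_cast three_le_card_of_ringChar_ne_two hF
  obtain ⟨hlo, hhi⟩ := card_cone_bounds hF hχ he hd
  rw [norm_sigmaInv_eq hF hχ hd hm, if_pos hΓ]
  set X := (Fintype.card F : ℝ) ^ e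
  have hX : 0 < X := by positivity
  rw [show (Fintype.card F : ℝ) ^ (2 * e + 1) = X * X * Fintype.card F by ring] at hlo hhi
  have hc : 0 < ((cone F (2 * e + 2) hd).card : ℝ) := lt_of_lt_of_le (by positivity) hlo
  constructor
  · rw [le_div_iff₀ hc, ← div_eq_mul_inv, div_mul_eq_mul_div, div_le_iff₀ hX]
    nlinarith
  · rw [div_le_iff₀ hc, ← div_eq_mul_inv, div_mul_eq_mul_div, le_div_iff₀ hX]
    nlinarith

lemma norm_sigmaInv_bounds_of_gammaForm_ne_zero (hF : ringChar F ≠ 2) (hχ : χ.IsPrimitive)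
    (he : 1 ≤ e) (hd : 3 ≤ 2 * e + 2) {m : Fin (2 * e + 2) → F} (hm : m ≠ 0)
    (hΓ : gammaForm F (2 * e + 2) hd m ≠ 0) :
    3 / 4 * ((Fintype.card F : ℝ) ^ (e + 1))⁻¹ ≤ ‖sigmaInv F (2 * e + 2) hd χ m‖ ∧
      ‖sigmaInv F (2 * e + 2) hd χ m‖ ≤ 3 / 2 * ((Fintype.card F : ℝ) ^ (e + 1))⁻¹ := by
  have hq : (3 : ℝ) ≤ Fintype.card F := by exact_mod_cast three_le_card_of_ringChar_ne_two hF
  obtain ⟨hlo, hhi⟩ := card_cone_bounds hF hχ he hd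
  rw [norm_sigmaInv_eq hF hχ hd hm, if_neg hΓ, mul_one, pow_succ]
  set X := (Fintype.card F : ℝ) ^ e
  have hX : 0 < X := by positivity
  rw [show (Fintype.card F : ℝ) ^ (2 * e + 1) = X * X * Fintype.card F by ring] at hlo hhi
  have hc : 0 < ((cone F (2 * e + 2) hd).card : ℝ) := lt_of_lt_of_le (by positivity) hlo
  constructor
  · rw [le_div_iff₀ hc, ← div_eq_mul_inv, div_mul_eq_mul_div, div_le_iff₀ (by positivity)]
    nlinarith
  · rw [div_le_iff₀ hc, ← div_eq_mul_inv, div_mul_eq_mul_div, le_div_iff₀ (by positivity)]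
    nlinarith

end Bounds

lemma zero_mem_cone (d : ℕ) (hd : 3 ≤ d) : (0 : Fin d → F) ∈ cone F d hd := by
  simp [cone]

lemma Kfun_zero (d : ℕ) (hd : 3 ≤ d) (χ : AddChar F ℂ) : Kfun F d hd χ 0 = 0 := by
  have hC : ((cone F d hd).card : ℂ) ≠ 0 :=
    Nat.cast_ne_zero.mpr (card_ne_zero_of_mem (zero_mem_cone d hd))
  simp [Kfun, sigmaInv, hC]

lemma Kfun_of_ne_zero (d : ℕ) (hd : 3 ≤ d) (χ : AddChar F ℂ) {m : Fin d → F} (hm : m ≠ 0) :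
    Kfun F d hd χ m = sigmaInv F d hd χ m := by
  simp [Kfun, hm]

lemma rpow_neg_half_eq_inv_pow {x a : ℝ} (hx : 0 ≤ x) {k : ℕ} (h : a = 2 * k) :
    x ^ (-(a / 2)) = (x ^ k)⁻¹ := by
  rw [h, mul_div_cancel_left₀ _ two_ne_zero, Real.rpow_neg hx, Real.rpow_natCast]

/-- the size of `K(m) = σ^∨(m) − δ₀(m)` for even `d ≥ 4`. -/
theorem statement4 (d : ℕ) (hd : 4 ≤ d) (hde : Even d) :
    ∃ c₁ C₁ c₂ C₂ : ℝ, 0 < c₁ ∧ 0 < C₁ ∧ 0 < c₂ ∧ 0 < C₂ ∧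
      ∀ (F : Type) [Field F] [Fintype F] [DecidableEq F], ringChar F ≠ 2 →
        ∀ χ : AddChar F ℂ, (∃ a, χ a ≠ 1) →
          Kfun F d (by omega) χ 0 = 0 ∧
          ∀ m : Fin d → F, m ≠ 0 →
            ‖Kfun F d (by omega) χ m‖ = ‖sigmaInv F d (by omega) χ m‖ ∧
            (gammaForm F d (by omega) m = 0 →
              c₁ * (Fintype.card F : ℝ) ^ (-(((d : ℝ) - 2) / 2)) ≤
                  ‖Kfun F d (by omega) χ m‖ ∧
                ‖Kfun F d (by omega) χ m‖ ≤
                  C₁ * (Fintype.card F : ℝ) ^ (-(((d : ℝ) - 2) / 2))) ∧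
            (gammaForm F d (by omega) m ≠ 0 →
              c₂ * (Fintype.card F : ℝ) ^ (-((d : ℝ) / 2)) ≤
                  ‖Kfun F d (by omega) χ m‖ ∧
                ‖Kfun F d (by omega) χ m‖ ≤
                  C₂ * (Fintype.card F : ℝ) ^ (-((d : ℝ) / 2))) := by
  refine ⟨1 / 2, 3 / 2, 3 / 4, 3 / 2, by norm_num, by norm_num, by norm_num, by norm_num, ?_⟩
  intro F _ _ _ hF χ hχ
  have hprim : χ.IsPrimitive := AddChar.IsPrimitive.of_ne_one (AddChar.ne_one_iff.mpr hχ)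
  obtain ⟨e, rfl⟩ : ∃ e, d = 2 * e + 2 := by
    obtain ⟨k, hk⟩ := hde
    exact ⟨k - 1, by omega⟩
  have hq : (0 : ℝ) ≤ Fintype.card F := Nat.cast_nonneg _
  rw [rpow_neg_half_eq_inv_pow hq (k := e) (by push_cast; ring),
    rpow_neg_half_eq_inv_pow hq (k := e + 1) (by push_cast; ring)]
  refine ⟨Kfun_zero _ _ χ, fun m hm => ?_⟩
  rw [Kfun_of_ne_zero _ _ χ hm]
  exact ⟨rfl, norm_sigmaInv_bounds_of_gammaForm_eq_zero hF hprim (by omega) _ hm,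
    norm_sigmaInv_bounds_of_gammaForm_ne_zero hF hprim (by omega) _ hm⟩

end ConeFF
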